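/- arXiv:2401.00063 — 2 statements merged into one kernel-verified Lean document; each statement's English description precedes it below -/
import Mathlib

section
/- For a graph G = (V, E_A ∪ E_B) with G_A = (V, E_A) and G_B = (V, E_B), the stable set polytope satisfies STAB(G) = STAB(G_A) ⊙ STAB(G_B), where ⊙ denotes the convex hull of Hadamard products of vertices (equivalently, of characteristic vectors of stable sets). -/
open Finset

variable {V : Type} [Fintype V] [DecidableEq V]

/-- The characteristic (0/1) vector of a set of vertices. -/
noncomputable def charVec (S : Set V) : V → ℝ := S.indicator 1

/-- A stable (independent) set: no two of its elements are adjacent. -/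
def IsStable (G : SimpleGraph V) (S : Set V) : Prop :=
  ∀ ⦃u⦄, u ∈ S → ∀ ⦃v⦄, v ∈ S → ¬ G.Adj u v

/-- The stable set polytope: convex hull of characteristic vectors of stable sets. -/
noncomputable def STAB (G : SimpleGraph V) : Set (V → ℝ) :=
  convexHull ℝ {x | ∃ S : Set V, IsStable G S ∧ x = charVec S}

/-- The clique-constrained (fractional stable set) polytope. -/
def QSTAB (G : SimpleGraph V) : Set (V → ℝ) :=
  {x | (∀ v, 0 ≤ x v) ∧ ∀ Q : Finset V, G.IsClique (↑Q : Set V) → ∑ v ∈ Q, x v ≤ 1}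

/-- The hybrid set `HSTAB(G) = STAB(G_A) ⊙ QSTAB(G_B)`: convex hull of Hadamard
products of vertices (extreme points) of the two polytopes; the vertices of
`STAB(G_A)` are exactly the characteristic vectors of stable sets of `G_A`. -/
noncomputable def HSTAB (GA GB : SimpleGraph V) : Set (V → ℝ) :=
  convexHull ℝ {z | ∃ S : Set V, IsStable GA S ∧
    ∃ ω ∈ (QSTAB GB).extremePoints ℝ, z = charVec S * ω}

/-- Maximum (supremum) of the linear functional `x ↦ w · x` over a set. -/
noncomputable def maxW (P : Set (V → ℝ)) (w : V → ℝ) : ℝ :=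
  sSup ((fun x => ∑ v, w v * x v) '' P)

/-! The stable sets of `G_A ⊔ G_B` are exactly the intersections `S ∩ T` of a stable set `S` of
`G_A` with a stable set `T` of `G_B`, and `χ_S ∘ χ_T = χ_{S ∩ T}`; so both sides are convex hulls
of the same set of 0/1 vectors. -/

omit [Fintype V] [DecidableEq V] in
theorem charVec_inter (S T : Set V) : charVec (S ∩ T) = charVec S * charVec T :=
  Set.inter_indicator_one

omit [Fintype V] [DecidableEq V] in
theorem IsStable.anti {G H : SimpleGraph V} {S : Set V} (hGH : G ≤ H) (hS : IsStable H S) :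
    IsStable G S :=
  fun _ hu _ hv h => hS hu hv (hGH h)

omit [Fintype V] [DecidableEq V] in
theorem IsStable.subset {G : SimpleGraph V} {S T : Set V} (hT : IsStable G T) (hST : S ⊆ T) :
    IsStable G S :=
  fun _ hu _ hv => hT (hST hu) (hST hv)

omit [Fintype V] [DecidableEq V] in
theorem isStable_sup_iff {G H : SimpleGraph V} {S : Set V} :
    IsStable (G ⊔ H) S ↔ IsStable G S ∧ IsStable H S :=
  ⟨fun hS => ⟨hS.anti le_sup_left, hS.anti le_sup_right⟩,
    fun ⟨hG, hH⟩ _ hu _ hv h => h.elim (hG hu hv) (hH hu hv)⟩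

/-- `STAB(G) = STAB(G_A) ⊙ STAB(G_B)` for `G = (V, E_A ∪ E_B)`,
where `⊙` is the convex hull of Hadamard products of vertices, i.e. of
characteristic vectors of stable sets of the two graphs. -/
theorem STAB_union_eq_odot (GA GB : SimpleGraph V) :
    STAB (GA ⊔ GB) =
      convexHull ℝ {z : V → ℝ | ∃ S T : Set V,
        IsStable GA S ∧ IsStable GB T ∧ z = charVec S * charVec T} := by
  unfold STAB
  congr 1
  ext x
  constructor
  · rintro ⟨S, hS, rfl⟩
    obtain ⟨hA, hB⟩ := isStable_sup_iff.1 hS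
    exact ⟨S, S, hA, hB, by rw [← charVec_inter, Set.inter_self]⟩
  · rintro ⟨S, T, hS, hT, rfl⟩
    exact ⟨S ∩ T, isStable_sup_iff.2 ⟨hS.subset Set.inter_subset_left,
      hT.subset Set.inter_subset_right⟩, (charVec_inter S T).symm⟩
end

section
/- Let G = (V, E_A ∪ E_B), G_A = (V, E_A), G_B = (V, E_B), and define HSTAB(G) = STAB(G_A) ⊙ QSTAB(G_B). Then every vertex of HSTAB(G) is a vertex of QSTAB(G); i.e., the set of extreme points of HSTAB(G) is contained in the set of extreme points of QSTAB(G). -/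
/-! A vertex `z` of `HSTAB` is one of its generators `χ_S ∘ ω`, with `S` stable in `G_A` and `ω` a
vertex of `QSTAB(G_B)`; it lies in `QSTAB(G)` because a clique of `G` meets `S` in a clique of
`G_B`. The points of `QSTAB(G)` supported in `S` form a face of `QSTAB(G)`, and all of them lie in
`HSTAB`: such a point is in `QSTAB(G_B)`, hence a convex combination of vertices `ω'` of this
polytope, and multiplying by `χ_S` fixes it. So `z` is a vertex of a face of `QSTAB(G)`, hence a
vertex of `QSTAB(G)`.

That `QSTAB(G_B)` is the convex hull of its vertices follows from Krein–Milman, since a vertex of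
a polyhedron is determined by its set of tight constraints, so there are finitely many. -/

open Finset

variable {V : Type} [Fintype V] [DecidableEq V]

open Filter Topology

section Polyhedron

variable {E ι : Type*} [AddCommGroup E] [Module ℝ E]

def polyhedron (f : ι → E →ₗ[ℝ] ℝ) (c : ι → ℝ) : Set E :=
  {x | ∀ i, f i x ≤ c i}

theorem convex_polyhedron (f : ι → E →ₗ[ℝ] ℝ) (c : ι → ℝ) : Convex ℝ (polyhedron f c) := by
  simpa only [polyhedron, Set.ofPred_forall] using
    convex_iInter fun i => convex_halfSpace_le (f i).isLinear (c i)

theorem isClosed_polyhedron [TopologicalSpace E] [IsTopologicalAddGroup E] [ContinuousSMul ℝ E]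
    [T2Space E] [FiniteDimensional ℝ E] (f : ι → E →ₗ[ℝ] ℝ) (c : ι → ℝ) :
    IsClosed (polyhedron f c) := by
  simpa only [polyhedron, Set.ofPred_forall] using
    isClosed_iInter fun i => isClosed_le (f i).continuous_of_finiteDimensional continuous_const

theorem eq_of_mem_extremePoints_polyhedron [Finite ι] {f : ι → E →ₗ[ℝ] ℝ} {c : ι → ℝ} {x y : E}
    (hx : x ∈ (polyhedron f c).extremePoints ℝ) (hy : y ∈ polyhedron f c)
    (htight : ∀ i, f i x = c i → f i y = c i) : x = y := by
  -- Constraints tight at `x` stay tight along the line through `x` and `y`, and the slack ones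
  -- survive a small step, so `x` lies strictly between `y` and a point of the polyhedron.
  have hstep : ∀ i, ∀ᶠ ε in 𝓝 (0 : ℝ), f i (x + ε • (x - y)) ≤ c i := by
    intro i
    simp only [map_add, map_smul, map_sub, smul_eq_mul]
    rcases (hx.1 i).eq_or_lt with htight_i | hslack
    · filter_upwards with ε
      simp [htight_i, htight i htight_i]
    · have hcont : Continuous fun ε : ℝ => f i x + ε * (f i x - f i y) := by fun_prop
      filter_upwards [(hcont.tendsto 0).eventually (gt_mem_nhds (by simpa using hslack))]
        with ε hε using hε.le
  obtain ⟨ε, hp, hε⟩ : ∃ ε : ℝ, x + ε • (x - y) ∈ polyhedron f c ∧ 0 < ε :=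
    (((Filter.eventually_all.2 hstep).filter_mono nhdsWithin_le_nhds).and
      self_mem_nhdsWithin).exists (f := 𝓝[>] 0)
  have hseg : x ∈ openSegment ℝ y (x + ε • (x - y)) := by
    refine ⟨ε / (1 + ε), 1 / (1 + ε), by positivity, by positivity, by field_simp; ring, ?_⟩
    match_scalars <;> field_simp; ring
  exact (hx.2 hy hp hseg).symm

theorem finite_extremePoints_polyhedron [Finite ι] (f : ι → E →ₗ[ℝ] ℝ) (c : ι → ℝ) :
    ((polyhedron f c).extremePoints ℝ).Finite :=
  Set.Finite.of_finite_image (f := fun x => {i | f i x = c i}) (Set.toFinite _)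
    fun _ hx _ hy hxy => eq_of_mem_extremePoints_polyhedron hx hy.1 fun i =>
      (Set.ext_iff.1 hxy i).1

end Polyhedron

theorem convexHull_extremePoints_eq_of_finite {E : Type*} [AddCommGroup E] [Module ℝ E]
    [TopologicalSpace E] [T2Space E] [IsTopologicalAddGroup E] [ContinuousSMul ℝ E]
    [LocallyConvexSpace ℝ E] {s : Set E} (hs : IsCompact s) (hconv : Convex ℝ s)
    (hfin : (s.extremePoints ℝ).Finite) : convexHull ℝ (s.extremePoints ℝ) = s := by
  simpa only [(Set.Finite.isClosed_convexHull ℝ hfin).closure_eq] using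
    closure_convexHull_extremePoints hs hconv

theorem isExtreme_setOf_support_subset {ι : Type*} {A : Set (ι → ℝ)} (hA : ∀ x ∈ A, 0 ≤ x)
    (S : Set ι) : IsExtreme ℝ A {x ∈ A | Function.support x ⊆ S} := by
  refine ⟨Set.sep_subset _ _, fun x hx y hy z ⟨_, hzS⟩ ⟨a, b, ha, hb, _, hz⟩ => ⟨hx, ?_⟩⟩
  intro v hv
  by_contra hvS
  have hsum : a * x v + b * y v = 0 := by
    simpa [← hz] using Function.notMem_support.1 fun h => hvS (hzS h)
  have hxv := ((add_eq_zero_iff_of_nonneg (mul_nonneg ha.le (hA x hx v))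
    (mul_nonneg hb.le (hA y hy v))).1 hsum).1
  exact hv ((mul_eq_zero.1 hxv).resolve_left ha.ne')

def qstabConstraint {V : Type} (G : SimpleGraph V) :
    V ⊕ {Q : Finset V // G.IsClique (Q : Set V)} → (V → ℝ) →ₗ[ℝ] ℝ
  | .inl v => -LinearMap.proj v
  | .inr Q => ∑ v ∈ Q.1, LinearMap.proj v

theorem QSTAB_eq_polyhedron {V : Type} (G : SimpleGraph V) :
    QSTAB G = polyhedron (qstabConstraint G) (Sum.elim 0 1) := by
  ext x
  simp [QSTAB, polyhedron, qstabConstraint]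

theorem QSTAB_anti {V : Type} : Antitone (QSTAB (V := V)) :=
  fun _ _ hGH _ hx => ⟨hx.1, fun Q hQ => hx.2 Q (hQ.mono hGH)⟩

theorem isCompact_QSTAB {V : Type} [Finite V] (G : SimpleGraph V) : IsCompact (QSTAB G) := by
  refine (isCompact_univ_pi fun _ => isCompact_Icc (a := (0 : ℝ)) (b := 1)).of_isClosed_subset
    (QSTAB_eq_polyhedron G ▸ isClosed_polyhedron _ _) fun x hx v _ => ⟨hx.1 v, ?_⟩
  simpa using hx.2 {v} (by simp)

theorem convexHull_extremePoints_QSTAB {V : Type} [Finite V] (G : SimpleGraph V) :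
    convexHull ℝ ((QSTAB G).extremePoints ℝ) = QSTAB G := by
  refine convexHull_extremePoints_eq_of_finite (isCompact_QSTAB G) ?_ ?_ <;>
    rw [QSTAB_eq_polyhedron]
  exacts [convex_polyhedron _ _, finite_extremePoints_polyhedron _ _]

theorem charVec_mul_eq_indicator {V : Type} (S : Set V) (x : V → ℝ) :
    charVec S * x = S.indicator x := by
  ext v
  by_cases hv : v ∈ S <;> simp [charVec, hv]

theorem charVec_mul_mem_QSTAB_sup {V : Type} {GA GB : SimpleGraph V} {S : Set V}
    (hS : IsStable GA S) {ω : V → ℝ} (hω : ω ∈ QSTAB GB) : charVec S * ω ∈ QSTAB (GA ⊔ GB) := by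
  classical
  rw [charVec_mul_eq_indicator]
  refine ⟨Set.indicator_nonneg fun v _ => hω.1 v, fun Q hQ => ?_⟩
  have hQS : GB.IsClique (↑(Q.filter (· ∈ S)) : Set V) := by
    intro a ha b hb hab
    rw [mem_coe, mem_filter] at ha hb
    exact (hQ ha.1 hb.1 hab).resolve_left (hS ha.2 hb.2)
  calc ∑ v ∈ Q, S.indicator ω v = ∑ v ∈ Q.filter (· ∈ S), ω v := by
        rw [sum_filter]; rfl
    _ ≤ 1 := hω.2 _ hQS

theorem mem_HSTAB_of_support_subset {V : Type} [Finite V] {GA GB : SimpleGraph V} {S : Set V}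
    (hS : IsStable GA S) {x : V → ℝ} (hx : x ∈ QSTAB GB) (hxS : Function.support x ⊆ S) :
    x ∈ HSTAB GA GB := by
  rw [← convexHull_extremePoints_QSTAB GB] at hx
  have hSx := Set.mem_image_of_mem (LinearMap.mulLeft ℝ (charVec S)) hx
  rw [LinearMap.image_convexHull, LinearMap.mulLeft_apply, charVec_mul_eq_indicator, Set.indicator_eq_self.2 hxS] at hSx
  exact convexHull_mono (by rintro _ ⟨ω, hω, rfl⟩; exact ⟨S, hS, ω, hω, rfl⟩) hSx

/-- Every vertex (extreme point) of
`HSTAB(G) = STAB(G_A) ⊙ QSTAB(G_B)` is a vertex of `QSTAB(G)`,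
where `G = (V, E_A ∪ E_B)`. -/
theorem HSTAB_extremePoints_subset (GA GB : SimpleGraph V) :
    (HSTAB GA GB).extremePoints ℝ ⊆ (QSTAB (GA ⊔ GB)).extremePoints ℝ := by
  intro z hz
  obtain ⟨S, hS, ω, hω, rfl⟩ := extremePoints_convexHull_subset hz
  set F := {x ∈ QSTAB (GA ⊔ GB) | Function.support x ⊆ S}
  have hface : IsExtreme ℝ (QSTAB (GA ⊔ GB)) F :=
    isExtreme_setOf_support_subset (fun _ hx => hx.1) S
  have hFH : F ⊆ HSTAB GA GB :=
    fun x hx => mem_HSTAB_of_support_subset hS (QSTAB_anti le_sup_right hx.1) hx.2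
  have hzF : charVec S * ω ∈ F :=
    ⟨charVec_mul_mem_QSTAB_sup hS hω.1,
      charVec_mul_eq_indicator S ω ▸ Set.support_indicator_subset⟩
  exact hface.extremePoints_subset_extremePoints
    (inter_extremePoints_subset_extremePoints_of_subset hFH ⟨hzF, hz⟩)
end
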